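/- Let t ≥ 2 be an integer and set n = 2(t·k − m) and w = n/2 = t·k − m. Then for every J ≥ 0, the partial sums of the unit vectors satisfy ∑_{j<J} exp(2πi·s^w_j/n) = − ∑_{j<J} exp(2πi·s^0_{j+1}/n) in the complex numbers; that is, the front boundary curve is the truncated base boundary curve (with its first edge removed) rotated by π. -/
import Mathlib


open Complex Real

/-- The shifted modular progression `s^i_j` with parameters `m`, `k`. -/
def smp (m k : ℕ) : ℕ → ℕ → ℕ
  | 0, j => (j * m) % k
  | i + 1, j => if smp m k i j = i then smp m k i j + k else smp m k i j

lemma smp_lb (m k : ℕ) (hk : 0 < k) (i j : ℕ) : i ≤ smp m k i j := by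
  induction i with
  | zero => exact Nat.zero_le _
  | succ i ih =>
    simp only [smp]
    split <;> omega

lemma smp_ub (m k : ℕ) (hk : 0 < k) (i j : ℕ) : smp m k i j < i + k := by
  induction i with
  | zero => simpa [smp] using Nat.mod_lt _ hk
  | succ i ih =>
    have := smp_lb m k hk i j
    simp only [smp]
    split <;> omega

lemma smp_mod (m k : ℕ) (i j : ℕ) : smp m k i j % k = (j * m) % k := by
  induction i with
  | zero => simp [smp]
  | succ i ih =>
    simp only [smp]
    split
    · rw [Nat.add_mod_right]; exact ih
    · exact ih

lemma interval_uniq (k x y L : ℕ) (hx1 : L ≤ x) (hx2 : x < L + k)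
    (hy1 : L ≤ y) (hy2 : y < L + k) (h : x % k = y % k) : x = y := by
  rcases le_total x y with hle | hle
  · have hd := (Nat.modEq_iff_dvd' hle).mp h
    have : y - x = 0 := by
      rcases Nat.eq_zero_or_pos (y - x) with h0 | h0
      · exact h0
      · exact absurd (Nat.le_of_dvd h0 hd) (by omega)
    omega
  · have hd := (Nat.modEq_iff_dvd' hle).mp h.symm
    have : x - y = 0 := by
      rcases Nat.eq_zero_or_pos (x - y) with h0 | h0
      · exact h0
      · exact absurd (Nat.le_of_dvd h0 hd) (by omega)
    omega

lemma smp_key (m k : ℕ) (hm : 0 < m) (hk : 0 < k) (hmk : m < k)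
    (t w : ℕ) (ht : 2 ≤ t) (hw : w = t * k - m) (j : ℕ) :
    smp m k w j = w + smp m k 0 (j + 1) := by
  have hwk : k ≤ w := by
    have : 2 * k ≤ t * k := Nat.mul_le_mul_right k ht
    omega
  set a := smp m k w j with ha
  set b := smp m k 0 (j + 1) with hb
  have hb' : b = ((j + 1) * m) % k := rfl
  have hbk : b < k := hb' ▸ Nat.mod_lt _ hk
  have h1 : w ≤ a := smp_lb m k hk w j
  have h2 : a < w + k := smp_ub m k hk w j
  have hmod : (a + m) % k = (w + b + m) % k := by
    have hxa : (a + m) % k = ((j + 1) * m) % k := by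
      have hmeq : a ≡ j * m [MOD k] := smp_mod m k w j
      have := hmeq.add_right m
      have heq : j * m + m = (j + 1) * m := by ring
      rw [heq] at this
      exact this
    have hxb : (w + b + m) % k = ((j + 1) * m) % k := by
      have hwb : w + b + m = b + t * k := by omega
      rw [hwb, Nat.add_mul_mod_self_right, Nat.mod_eq_of_lt hbk, hb']
    rw [hxa, hxb]
  have := interval_uniq k (a + m) (w + b + m) (w + m)
    (by omega) (by omega) (by omega) (by omega) hmod
  omega

theorem stmt_17 (m k : ℕ) (hm : 0 < m) (hk : 0 < k) (hmk : m < k)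
    (hgcd : Nat.gcd m k = 1) (t n w : ℕ) (ht : 2 ≤ t) (hn : n = 2 * (t * k - m))
    (hw : w = t * k - m) (J : ℕ) :
    ∑ j ∈ Finset.range J,
        Complex.exp (2 * Real.pi * Complex.I * (smp m k w j : ℂ) / (n : ℂ)) =
      - ∑ j ∈ Finset.range J,
          Complex.exp (2 * Real.pi * Complex.I * (smp m k 0 (j + 1) : ℂ) / (n : ℂ)) := by
  have hwk : k ≤ w := by
    have : 2 * k ≤ t * k := Nat.mul_le_mul_right k ht
    omega
  have hw0 : 0 < w := by omega
  have hnw : n = 2 * w := by omega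
  have hwC : ((w : ℂ)) ≠ 0 := by exact_mod_cast hw0.ne'
  rw [← Finset.sum_neg_distrib]
  apply Finset.sum_congr rfl
  intro j _
  rw [smp_key m k hm hk hmk t w ht hw j]
  have hnC : (n : ℂ) = 2 * (w : ℂ) := by exact_mod_cast hnw
  have harg : 2 * (Real.pi : ℂ) * Complex.I * ((w + smp m k 0 (j + 1) : ℕ) : ℂ) / (n : ℂ)
      = (Real.pi : ℂ) * Complex.I + 2 * (Real.pi : ℂ) * Complex.I * ((smp m k 0 (j + 1) : ℕ) : ℂ) / (n : ℂ) := by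
    rw [hnC]
    push_cast
    field_simp
  rw [harg, Complex.exp_add, Complex.exp_pi_mul_I]
  ring
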